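/- In the setting of the parametric quadratic program min_x (1/2)xᵀQx + (q + Fλ)ᵀx subject to Gx ≤ h with Q positive definite and nonempty compact feasible polyhedron, the optimal-solution map λ ↦ x*(λ) is continuous on ℝᵐ. -/

import Mathlib

/-! If `Q` is positive definite, the objective is `μ`-strongly convex, where `μ > 0` is the minimum
of `z ⬝ᵥ Q z` on the unit sphere. Comparing a minimizer with the midpoint towards any other feasible
point shows that minimizers of a strongly convex function over a convex set, tilted by two linear
functionals `ℓ` and `ℓ'`, lie within `(2 / μ) ‖ℓ - ℓ'‖` of each other. As the tilt `λ ↦ q + F λ`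
is affine, the solution map is Lipschitz, hence continuous. -/

open Matrix Set Filter Topology Metric

section StrongConvexity

variable {E : Type*} [NormedAddCommGroup E] [NormedSpace ℝ E] {K : Set E} {m : ℝ} {f : E → ℝ}

theorem StrongConvexOn.add_continuousLinearMap (hf : StrongConvexOn K m f) (ℓ : E →L[ℝ] ℝ) :
    StrongConvexOn K m fun y => f y + ℓ y := by
  have h := hf.add (ℓ.toLinearMap.convexOn hf.1).uniformConvexOn_zero
  rwa [add_zero] at h

theorem StrongConvexOn.add_sq_norm_sub_le_of_isMinOn (hf : StrongConvexOn K m f) {x y : E}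
    (hx : x ∈ K) (hy : y ∈ K) (hmin : IsMinOn f K x) : f x + m / 4 * ‖x - y‖ ^ 2 ≤ f y := by
  have hhalf : (0 : ℝ) ≤ 1 / 2 := by norm_num
  have hmid := hf.2 hx hy hhalf hhalf (by norm_num)
  have hle : f x ≤ f _ := hmin (hf.1 hx hy hhalf hhalf (by norm_num))
  simp only [smul_eq_mul] at hmid
  linarith

theorem StrongConvexOn.norm_sub_le_of_isMinOn_add (hf : StrongConvexOn K m f) (hm : 0 < m)
    {ℓ ℓ' : E →L[ℝ] ℝ} {x x' : E} (hx : x ∈ K) (hx' : x' ∈ K)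
    (hmin : IsMinOn (fun y => f y + ℓ y) K x) (hmin' : IsMinOn (fun y => f y + ℓ' y) K x') :
    ‖x - x'‖ ≤ 2 / m * ‖ℓ - ℓ'‖ := by
  have h := (hf.add_continuousLinearMap ℓ).add_sq_norm_sub_le_of_isMinOn hx hx' hmin
  have h' := (hf.add_continuousLinearMap ℓ').add_sq_norm_sub_le_of_isMinOn hx' hx hmin'
  have hdual : (ℓ - ℓ') (x' - x) ≤ ‖ℓ - ℓ'‖ * ‖x - x'‖ := by
    rw [norm_sub_rev x]
    exact (le_abs_self _).trans ((ℓ - ℓ').le_opNorm _)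
  have hsq : m / 2 * ‖x - x'‖ ^ 2 ≤ ‖ℓ - ℓ'‖ * ‖x - x'‖ := by
    rw [norm_sub_rev x' x] at h'
    simp only [_root_.sub_apply, map_sub] at hdual
    linarith
  rcases (norm_nonneg (x - x')).eq_or_lt with h0 | hpos
  · rw [← h0]; positivity
  · rw [div_mul_eq_mul_div, le_div_iff₀ hm]
    nlinarith

theorem StrongConvexOn.continuous_of_isMinOn_add {P : Type*} [TopologicalSpace P]
    (hf : StrongConvexOn K m f) (hm : 0 < m) {ℓ : P → E →L[ℝ] ℝ} (hℓ : Continuous ℓ)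
    {x : P → E} (hx : ∀ p, x p ∈ K ∧ IsMinOn (fun y => f y + ℓ p y) K (x p)) : Continuous x := by
  refine continuous_iff_continuousAt.2 fun p₀ => tendsto_iff_dist_tendsto_zero.2 ?_
  have hbound : Tendsto (fun p => 2 / m * ‖ℓ p - ℓ p₀‖) (𝓝 p₀) (𝓝 0) := by
    have hcont := ((hℓ.sub (continuous_const : Continuous fun _ => ℓ p₀)).norm.const_mul (2 / m))
    simpa using hcont.tendsto p₀
  refine squeeze_zero (fun _ => dist_nonneg) (fun p => ?_) hbound
  rw [dist_eq_norm]
  exact hf.norm_sub_le_of_isMinOn_add hm (hx p).1 (hx p₀).1 (hx p).2 (hx p₀).2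

end StrongConvexity

theorem exists_pos_mul_sq_norm_le {E : Type*} [NormedAddCommGroup E] [NormedSpace ℝ E]
    [ProperSpace E] {g : E → ℝ} (hg : Continuous g) (hsmul : ∀ (t : ℝ) z, g (t • z) = t ^ 2 * g z)
    (hpos : ∀ z ≠ 0, 0 < g z) : ∃ μ > 0, ∀ z, μ * ‖z‖ ^ 2 ≤ g z := by
  have hg0 : g 0 = 0 := by simpa using hsmul 0 0
  have hnormalize : ∀ z : E, z ≠ 0 →
      ‖z‖⁻¹ • z ∈ sphere (0 : E) 1 ∧ g z = ‖z‖ ^ 2 * g (‖z‖⁻¹ • z) := by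
    intro z hz
    refine ⟨by simp [norm_smul, hz], ?_⟩
    rw [hsmul, ← mul_assoc, ← mul_pow, mul_inv_cancel₀ (norm_ne_zero_iff.2 hz), one_pow, one_mul]
  rcases (sphere (0 : E) 1).eq_empty_or_nonempty with hempty | hne
  · refine ⟨1, one_pos, fun z => ?_⟩
    by_cases hz : z = 0
    · simp [hz, hg0]
    · simpa [hempty] using (hnormalize z hz).1
  · obtain ⟨z₀, hz₀, hmin⟩ := (isCompact_sphere (0 : E) 1).exists_isMinOn hne hg.continuousOn
    refine ⟨g z₀, hpos z₀ (ne_zero_of_mem_sphere one_ne_zero ⟨z₀, hz₀⟩), fun z => ?_⟩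
    by_cases hz : z = 0
    · simp [hz, hg0]
    · obtain ⟨hu, hgz⟩ := hnormalize z hz
      rw [hgz, mul_comm]
      exact mul_le_mul_of_nonneg_left (hmin hu) (by positivity)

namespace Matrix

variable {ι κ : Type*} [Fintype ι]

theorem PosDef.exists_pos_mul_sq_norm_le {Q : Matrix ι ι ℝ} (hQ : Q.PosDef) :
    ∃ μ > 0, ∀ z : ι → ℝ, μ * ‖z‖ ^ 2 ≤ z ⬝ᵥ (Q *ᵥ z) :=
  _root_.exists_pos_mul_sq_norm_le
    (continuous_id.dotProduct (continuous_const.matrix_mulVec continuous_id))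
    (fun t z => by simp only [mulVec_smul, dotProduct_smul, smul_dotProduct, smul_eq_mul]; ring)
    fun _ hz => hQ.dotProduct_mulVec_pos hz

theorem strongConvexOn_half_dotProduct_mulVec {Q : Matrix ι ι ℝ} (hQ : Q.IsSymm) {μ : ℝ}
    (hμ : ∀ z : ι → ℝ, μ * ‖z‖ ^ 2 ≤ z ⬝ᵥ (Q *ᵥ z)) {K : Set (ι → ℝ)} (hK : Convex ℝ K) :
    StrongConvexOn K μ fun y => 1 / 2 * (y ⬝ᵥ (Q *ᵥ y)) := by
  refine ⟨hK, fun x _ y _ a b ha hb hab => ?_⟩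
  have hsymm : y ⬝ᵥ (Q *ᵥ x) = x ⬝ᵥ (Q *ᵥ y) := by
    rw [dotProduct_mulVec, ← mulVec_transpose, hQ, dotProduct_comm]
  have hgap : a * (1 / 2 * (x ⬝ᵥ (Q *ᵥ x))) + b * (1 / 2 * (y ⬝ᵥ (Q *ᵥ y)))
      - 1 / 2 * ((a • x + b • y) ⬝ᵥ (Q *ᵥ (a • x + b • y)))
      = a * b / 2 * ((x - y) ⬝ᵥ (Q *ᵥ (x - y))) := by
    simp only [mulVec_add, mulVec_smul, mulVec_sub, dotProduct_add, add_dotProduct,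
      dotProduct_sub, sub_dotProduct, dotProduct_smul, smul_dotProduct, smul_eq_mul]
    rw [hsymm, show b = 1 - a by linarith]
    ring
  simp only [smul_eq_mul]
  nlinarith [hμ (x - y), mul_nonneg ha hb]

theorem convex_setOf_mulVec_le (G : Matrix κ ι ℝ) (h : κ → ℝ) :
    Convex ℝ {x | ∀ i, (G *ᵥ x) i ≤ h i} := by
  simp only [ofPred_forall]
  exact convex_iInter fun i =>
    convex_halfSpace_le ((LinearMap.proj i ∘ₗ G.mulVecLin).isLinear) (h i)

noncomputable def dotProductCLM : (ι → ℝ) →L[ℝ] (ι → ℝ) →L[ℝ] ℝ :=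
  LinearMap.toContinuousLinearMap
    ((LinearMap.toContinuousLinearMap : ((ι → ℝ) →ₗ[ℝ] ℝ) ≃ₗ[ℝ] _).toLinearMap ∘ₗ
      dotProductBilin ℝ ℝ)

end Matrix

theorem stmt1_general {n m p : ℕ}
    (Q : Matrix (Fin n) (Fin n) ℝ) (hQsymm : Q.IsSymm) (hQ : Q.PosDef)
    (q : Fin n → ℝ) (F : Matrix (Fin n) (Fin m) ℝ)
    (G : Matrix (Fin p) (Fin n) ℝ) (h : Fin p → ℝ)
    (K : Set (Fin n → ℝ)) (hK : K = {x | ∀ i, (G *ᵥ x) i ≤ h i})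
    (xstar : (Fin m → ℝ) → (Fin n → ℝ))
    (hxstar : ∀ lam : Fin m → ℝ, xstar lam ∈ K ∧
      IsMinOn (fun y => (1 / 2) * (y ⬝ᵥ (Q *ᵥ y)) + (q + F *ᵥ lam) ⬝ᵥ y) K (xstar lam)) :
    Continuous xstar := by
  obtain ⟨μ, hμ, hQμ⟩ := hQ.exists_pos_mul_sq_norm_le
  have hconvex : Convex ℝ K := hK ▸ G.convex_setOf_mulVec_le h
  have htilt : Continuous fun lam : Fin m → ℝ => dotProductCLM (q + F *ᵥ lam) :=
    dotProductCLM.continuous.comp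
      (continuous_const.add (continuous_const.matrix_mulVec continuous_id))
  exact (strongConvexOn_half_dotProduct_mulVec hQsymm hQμ hconvex).continuous_of_isMinOn_add
    hμ htilt hxstar

/-- For the parametric QP with positive definite `Q` and nonempty compact
polyhedral feasible set, the optimal-solution map `λ ↦ x*(λ)` is continuous on `ℝᵐ`. -/
theorem stmt1 {n m p : ℕ}
    (Q : Matrix (Fin n) (Fin n) ℝ) (hQsymm : Q.IsSymm) (hQ : Q.PosDef)
    (q : Fin n → ℝ) (F : Matrix (Fin n) (Fin m) ℝ)
    (G : Matrix (Fin p) (Fin n) ℝ) (h : Fin p → ℝ)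
    (K : Set (Fin n → ℝ)) (hK : K = {x | ∀ i, (G *ᵥ x) i ≤ h i})
    (hne : K.Nonempty) (hcpt : IsCompact K)
    (xstar : (Fin m → ℝ) → (Fin n → ℝ))
    (hxstar : ∀ lam : Fin m → ℝ, xstar lam ∈ K ∧
      IsMinOn (fun y => (1 / 2) * (y ⬝ᵥ (Q *ᵥ y)) + (q + F *ᵥ lam) ⬝ᵥ y) K (xstar lam)) :
    Continuous xstar :=
  stmt1_general Q hQsymm hQ q F G h K hK xstar hxstar
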